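/- Let n ≥ 1 and let E be a subgroup of GL_3(ℤ/2^nℤ) of order 7. Then the quotient N_{GL_3(ℤ/2^nℤ)}(E)/E of the normalizer of E by E has order 3·2^a for some integer a ≥ 0; that is, it is a {2,3}-group whose Sylow 3-subgroups have order exactly 3. -/

import Mathlib

/-!
Reduction mod 2 maps `GL₃(ℤ/2ⁿ)` onto `GL₃(𝔽₂)`, which has order `168 = 2³·3·7`, and its kernel
consists of matrices `1 + 2A`, whose `2ⁿ⁻¹`-th powers are `1`; so `|GL₃(ℤ/2ⁿ)| = 2ᵐ·3·7` and `E`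
is a Sylow 7-subgroup. Then `|N(E)/E| · n₇ = [G : E] = 2ᵐ·3` with `n₇ ≡ 1 (mod 7)`. Since
`3·2ⁱ` is never `1` mod 7, `3 ∤ n₇`, so `n₇` is a power of 2 and `|N(E)/E| = 3·2ᵃ`.
-/

open Polynomial in
theorem one_add_natCast_mul_pow_pow_eq_one {A : Type*} [Ring A] {p k : ℕ}
    (hp : (p : A) ^ (k + 1) = 0) (a : A) : (1 + p * a) ^ p ^ k = 1 := by
  -- `A` need not be commutative, so compute in `ℤ[X]` and evaluate at `a`.
  obtain ⟨q, hq⟩ := dvd_sub_pow_of_dvd_sub (p := p) (a := 1 + (p : ℤ[X]) * X) (b := 1)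
    ⟨X, by ring⟩ k
  have h := congrArg (aeval a) hq
  simp only [map_sub, map_pow, map_add, map_one, map_mul, map_natCast, aeval_X, one_pow, hp,
    zero_mul] at h
  exact sub_eq_zero.mp h

namespace ZMod

variable {m : ℕ} [NeZero m] (k : ℕ)

instance isLocalHom_castHom_pow :
    IsLocalHom (castHom (dvd_pow_self m k.succ_ne_zero) (ZMod m)) := by
  refine ⟨fun x hx => ?_⟩
  rw [← natCast_zmod_val x, map_natCast, isUnit_iff_coprime] at hx
  rw [← natCast_zmod_val x, isUnit_iff_coprime]
  exact hx.pow_right _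

theorem natCast_dvd_of_castHom_pow_eq_zero {x : ZMod (m ^ (k + 1))}
    (hx : castHom (dvd_pow_self m k.succ_ne_zero) (ZMod m) x = 0) :
    (m : ZMod (m ^ (k + 1))) ∣ x := by
  rw [← natCast_zmod_val x, map_natCast, natCast_eq_zero_iff] at hx
  obtain ⟨c, hc⟩ := hx
  exact ⟨c, by rw [← natCast_zmod_val x, hc, Nat.cast_mul]⟩

end ZMod

namespace Matrix.GeneralLinearGroup

variable {n : Type*} [Fintype n] [DecidableEq n] {R S : Type*} [CommRing R] [CommRing S]

theorem map_surjective {f : R →+* S} (hf : Function.Surjective f) [IsLocalHom f] :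
    Function.Surjective (map (n := n) f) := by
  intro g
  set M : Matrix n n R := (g : Matrix n n S).map (Function.surjInv hf)
  have hM : M.map f = g := by ext; simp [M, Function.surjInv_eq hf]
  have hdet : IsUnit M.det := by
    refine IsUnit.of_map f _ ?_
    rw [RingHom.map_det, RingHom.mapMatrix_apply, hM]
    exact g.isUnit.map Matrix.detMonoidHom
  exact ⟨nonsingInvUnit M hdet, Units.ext hM⟩

theorem isPGroup_ker_map (f : R →+* S) {p k : ℕ} (hf : ∀ x, f x = 0 → (p : R) ∣ x)
    (hp : (p : R) ^ (k + 1) = 0) : IsPGroup p (map (n := n) f).ker := by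
  rintro ⟨g, hg⟩
  refine ⟨k, Subtype.ext (Units.ext ?_)⟩
  have hg1 : (g : Matrix n n R).map f = 1 := congrArg Units.val hg
  have hf1 : (1 : Matrix n n R).map f = 1 := Matrix.map_one f f.map_zero f.map_one
  have hentry : ∀ i j, (p : R) ∣ (g - 1 : Matrix n n R) i j := fun i j => hf _ <| by
    have h := congrFun₂ hg1 i j
    have h1 := congrFun₂ hf1 i j
    rw [map_apply] at h h1
    rw [sub_apply, map_sub, h, h1, sub_self]
  choose a ha using hentry
  have hga : (g : Matrix n n R) = 1 + p * Matrix.of a := by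
    ext i j
    rw [← nsmul_eq_mul]
    simpa [sub_eq_iff_eq_add'] using ha i j
  have hpM : (p : Matrix n n R) ^ (k + 1) = 0 := by
    rw [← map_natCast (Matrix.scalar n : R →+* Matrix n n R), ← map_pow, hp, map_zero]
  simp [hga, one_add_natCast_mul_pow_pow_eq_one hpM]

variable (n) in
theorem exists_card_zmod_prime_pow_eq (p : ℕ) [Fact p.Prime] (k : ℕ) :
    ∃ j, Nat.card (GL n (ZMod (p ^ (k + 1)))) = Nat.card (GL n (ZMod p)) * p ^ j := by
  set f := ZMod.castHom (dvd_pow_self p k.succ_ne_zero) (ZMod p)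
  have hker : IsPGroup p (map (n := n) f).ker :=
    isPGroup_ker_map f (fun _ => ZMod.natCast_dvd_of_castHom_pow_eq_zero k)
      (by rw [← Nat.cast_pow, ZMod.natCast_self])
  obtain ⟨j, hj⟩ := hker.exists_card_eq
  refine ⟨j, ?_⟩
  rw [← hj, ← (map f).ker.index_mul_card, Subgroup.index_ker,
    (map f).range_eq_top.mpr (map_surjective (ZMod.castHom_surjective _)), Subgroup.card_top]

end Matrix.GeneralLinearGroup

open Subgroup in
theorem Sylow.relIndex_normalizer_mul_card {G : Type*} [Group G] {p : ℕ} [Fact p.Prime]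
    [Finite (Sylow p G)] (P : Sylow p G) :
    (P : Subgroup G).relIndex (normalizer (P : Set G)) * Nat.card (Sylow p G) = P.index := by
  rw [P.card_eq_index_normalizer]
  exact relIndex_mul_index le_normalizer

theorem Nat.three_mul_two_pow_not_modEq_one (i : ℕ) : ¬ 3 * 2 ^ i ≡ 1 [MOD 7] := by
  obtain ⟨j, r, hr, rfl⟩ : ∃ j r, r < 3 ∧ i = r + 3 * j :=
    ⟨i / 3, i % 3, i.mod_lt (by norm_num), (Nat.mod_add_div i 3).symm⟩
  rw [Nat.ModEq, pow_add, pow_mul, Nat.mul_mod, Nat.mul_mod (2 ^ r), Nat.pow_mod (2 ^ 3)]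
  interval_cases r <;> simp

theorem Nat.exists_eq_three_mul_two_pow_of_mul_eq {q s m : ℕ} (h : q * s = 2 ^ m * 3)
    (hs : s ≡ 1 [MOD 7]) : ∃ a, q = 3 * 2 ^ a := by
  have h3 : ¬ 3 ∣ s := by
    rintro ⟨t, rfl⟩
    obtain ⟨i, -, rfl⟩ :=
      (Nat.dvd_prime_pow Nat.prime_two).mp (Dvd.intro q (by linarith) : t ∣ 2 ^ m)
    exact three_mul_two_pow_not_modEq_one i hs
  have hs2 : s ∣ 2 ^ m :=
    (Nat.prime_three.coprime_iff_not_dvd.mpr h3).symm.dvd_of_dvd_mul_right ⟨q, by linarith⟩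
  obtain ⟨i, hi, rfl⟩ := (Nat.dvd_prime_pow Nat.prime_two).mp hs2
  refine ⟨m - i, Nat.eq_of_mul_eq_mul_right (pow_pos two_pos i) ?_⟩
  rw [h, mul_assoc, ← pow_add, Nat.sub_add_cancel hi, mul_comm]

open Subgroup in
theorem exists_card_quotient_normalizer_eq_three_mul_two_pow {G : Type*} [Group G] [Finite G]
    {E : Subgroup G} {m : ℕ} (hE : Nat.card E = 7) (hG : Nat.card G = 2 ^ m * 3 * 7) :
    ∃ a, Nat.card (normalizer (E : Set G) ⧸ E.subgroupOf (normalizer (E : Set G))) =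
      3 * 2 ^ a := by
  have : Fact (Nat.Prime 7) := ⟨by norm_num⟩
  have hindex : E.index = 2 ^ m * 3 :=
    Nat.eq_of_mul_eq_mul_right (by norm_num : 0 < 7) (by rw [← hG, ← E.index_mul_card, hE])
  have h7 : ¬ 7 ∣ E.index := hindex ▸ (Nat.Prime.coprime_iff_not_dvd Fact.out).mp
    (Nat.Coprime.mul_right (.pow_right _ (by norm_num)) (by norm_num))
  let P : Sylow 7 G := (IsPGroup.of_card (hE.trans (pow_one 7).symm)).toSylow h7
  exact Nat.exists_eq_three_mul_two_pow_of_mul_eq (P.relIndex_normalizer_mul_card.trans hindex)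
    (card_sylow_modEq_one 7 G)

/-- Let `n ≥ 1` and `E` a subgroup of `GL_3(ℤ/2^nℤ)` of order `7`. Then
`N_{GL_3(ℤ/2^nℤ)}(E)/E` has order `3·2^a` for some `a ≥ 0`. -/
theorem stmt16 (n : ℕ) (hn : 1 ≤ n) (E : Subgroup (GL (Fin 3) (ZMod (2 ^ n))))
    (hE : Nat.card E = 7) :
    ∃ a : ℕ, Nat.card (Subgroup.normalizer (E : Set (GL (Fin 3) (ZMod (2 ^ n)))) ⧸
      E.subgroupOf (Subgroup.normalizer (E : Set (GL (Fin 3) (ZMod (2 ^ n)))))) = 3 * 2 ^ a := by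
  obtain ⟨k, rfl⟩ := Nat.exists_eq_add_of_le' hn
  obtain ⟨j, hj⟩ := Matrix.GeneralLinearGroup.exists_card_zmod_prime_pow_eq (Fin 3) 2 k
  have h168 : Nat.card (GL (Fin 3) (ZMod 2)) = 2 ^ 3 * 3 * 7 := by
    rw [Matrix.card_GL_field]
    simp [Fin.prod_univ_succ, ZMod.card]
  exact exists_card_quotient_normalizer_eq_three_mul_two_pow hE (m := j + 3)
    (by rw [hj, h168]; ring)
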